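/- There exists a constant C > 0 such that for every e ∈ ℝ, every p ∈ [0,2] and every b_1 > 0, |∫ K_1^{(1)}((ε̃ − e)/b_1) ε̃^p f(ε̃) dε̃| ≤ C b_1^2 (Lemma 4, first-derivative bound). -/

import Mathlib

/-!
Substituting `u = e + b₁ v` turns the integral into `b₁ ∫ K₁'(v) h_p(e + b₁ v) dv`, and since
`∫ K₁' = 0` one may subtract `h_p(e)` inside the integral; a Lipschitz bound `L` on `h_p` then
gives `b₁ · L b₁ ∫ |v| |K₁'(v)| dv`. The constant `L` has to be uniform in `p ∈ [0, 2]`. Away from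
`0`, `h_p' = p u^(p-1) f + u^p f'` is controlled by interpolating `|u|^(p-1)` between `|u|⁻¹` and
`|u|`, and `|u|^p` between `1` and `u²`, using the bounds on `f'`, `u f` and `u² f'`. The term
`|u|⁻¹ |f(u)|` stays bounded because `f(0) = 0`, which is forced by the boundedness of the
derivative of `√u f(u)`.
-/

open MeasureTheory Real Set Filter Topology
open scoped NNReal

theorem monotone_of_deriv_nonneg_of_ne {g : ℝ → ℝ} (x₀ : ℝ) (hg : Continuous g)
    (hd : ∀ x ≠ x₀, DifferentiableAt ℝ g x) (hg' : ∀ x ≠ x₀, 0 ≤ deriv g x) : Monotone g := by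
  refine MonotoneOn.Iic_union_Ici (a := x₀) ?_ ?_
  · refine monotoneOn_of_deriv_nonneg (convex_Iic x₀) hg.continuousOn ?_ ?_ <;>
      rw [interior_Iic]
    exacts [fun x hx => (hd x hx.ne).differentiableWithinAt, fun x hx => hg' x hx.ne]
  · refine monotoneOn_of_deriv_nonneg (convex_Ici x₀) hg.continuousOn ?_ ?_ <;>
      rw [interior_Ici]
    exacts [fun x hx => (hd x hx.ne').differentiableWithinAt, fun x hx => hg' x hx.ne']

theorem abs_sub_le_mul_of_abs_deriv_le_of_ne {g : ℝ → ℝ} {C : ℝ} (x₀ : ℝ) (hg : Continuous g)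
    (hd : ∀ x ≠ x₀, DifferentiableAt ℝ g x) (hC : ∀ x ≠ x₀, |deriv g x| ≤ C) (x y : ℝ) :
    |g y - g x| ≤ C * |y - x| := by
  wlog hxy : x ≤ y generalizing x y
  · rw [abs_sub_comm, abs_sub_comm y]
    exact this y x (le_of_not_ge hxy)
  have hmono (s : ℝ) (hs : s = 1 ∨ s = -1) : Monotone fun t => C * t - s * g t := by
    refine monotone_of_deriv_nonneg_of_ne x₀ (by fun_prop) (fun t ht => by fun_prop) fun t ht => ?_
    have hderiv : HasDerivAt (fun t => C * t - s * g t) (C * 1 - s * deriv g t) t :=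
      ((hasDerivAt_id t).const_mul C).sub ((hd t ht).hasDerivAt.const_mul s)
    rw [hderiv.deriv, mul_one, sub_nonneg]
    rcases hs with rfl | rfl <;> linarith [abs_le.mp (hC t ht)]
  have h₁ := hmono 1 (Or.inl rfl) hxy
  have h₂ := hmono (-1) (Or.inr rfl) hxy
  rw [abs_of_nonneg (sub_nonneg.mpr hxy), abs_le]
  constructor <;> linarith

theorem rpow_le_rpow_add_rpow {t a a₀ a₁ : ℝ} (ht : 0 < t) (ha₀ : a₀ ≤ a) (ha₁ : a ≤ a₁) :
    t ^ a ≤ t ^ a₀ + t ^ a₁ := by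
  rcases le_total t 1 with h | h
  · linarith [rpow_le_rpow_of_exponent_ge ht h ha₀, rpow_nonneg ht.le a₁]
  · linarith [rpow_le_rpow_of_exponent_le h ha₁, rpow_nonneg ht.le a₀]

section

variable {f : ℝ → ℝ}

theorem hasDerivAt_rpow_mul {x : ℝ} (hf : DifferentiableAt ℝ f x) (p : ℝ) (hx : x ≠ 0) :
    HasDerivAt (fun u => u ^ p * f u) (p * x ^ (p - 1) * f x + x ^ p * deriv f x) x :=
  (hasDerivAt_rpow_const (Or.inl hx)).mul hf.hasDerivAt

theorem apply_zero_eq_zero_of_abs_deriv_rpow_mul_le (hf : Differentiable ℝ f) {p C : ℝ}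
    (hp₀ : 0 < p) (hp₁ : p < 1) (hC : ∀ x ≠ 0, |deriv (fun u => u ^ p * f u) x| ≤ C) :
    f 0 = 0 := by
  have hlip := abs_sub_le_mul_of_abs_deriv_le_of_ne (g := fun u => u ^ p * f u) 0
    ((continuous_rpow_const hp₀.le).mul hf.continuous)
    (fun x hx => (hasDerivAt_rpow_mul (hf x) p hx).differentiableAt) hC 0
  have hbound : ∀ u > 0, |f u| ≤ C * u ^ (1 - p) := by
    intro u hu
    have hpos : 0 < u ^ p := rpow_pos_of_pos hu p
    have h := hlip u
    rw [zero_rpow hp₀.ne', zero_mul, sub_zero, sub_zero, abs_mul, abs_of_pos hpos,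
      abs_of_pos hu] at h
    have hsplit : C * u = u ^ p * (C * u ^ (1 - p)) := by
      rw [mul_left_comm, ← rpow_add hu, add_sub_cancel, rpow_one]
    rw [hsplit] at h
    exact le_of_mul_le_mul_left h hpos
  have hlim : Tendsto (fun u => C * u ^ (1 - p)) (𝓝[>] 0) (𝓝 0) := by
    have := ((continuous_rpow_const (sub_pos.mpr hp₁).le).tendsto 0).const_mul C
    rw [zero_rpow (sub_pos.mpr hp₁).ne', mul_zero] at this
    exact this.mono_left nhdsWithin_le_nhds
  have hf0 : |f 0| ≤ 0 :=
    le_of_tendsto_of_tendsto ((hf.continuous.abs.tendsto 0).mono_left nhdsWithin_le_nhds) hlim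
      (eventually_nhdsWithin_of_forall hbound)
  exact abs_nonpos_iff.mp hf0

theorem abs_sq_mul_deriv_le (hf : Differentiable ℝ f) {A C : ℝ} (hA : ∀ x, |x * f x| ≤ A)
    (hC : ∀ x, |deriv (fun u => u ^ (2 : ℝ) * f u) x| ≤ C) (x : ℝ) :
    |x ^ 2 * deriv f x| ≤ C + 2 * A := by
  rcases eq_or_ne x 0 with rfl | hx
  · simp only [ne_eq, OfNat.ofNat_ne_zero, not_false_eq_true, zero_pow, zero_mul, abs_zero]
    linarith [(abs_nonneg _).trans (hC 0), (abs_nonneg _).trans (hA 0)]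
  have hderiv := hC x
  rw [(hasDerivAt_rpow_mul (hf x) 2 hx).deriv] at hderiv
  norm_num [rpow_two] at hderiv
  calc |x ^ 2 * deriv f x| = |(2 * x * f x + x ^ 2 * deriv f x) - 2 * (x * f x)| := by ring_nf
    _ ≤ |2 * x * f x + x ^ 2 * deriv f x| + |2 * (x * f x)| := abs_sub _ _
    _ ≤ C + 2 * A := by rw [abs_mul, abs_two]; linarith [hA x]

theorem abs_deriv_rpow_mul_le (hf : Differentiable ℝ f) {M A B : ℝ}
    (hM : ∀ x, |deriv f x| ≤ M) (hlin : ∀ x, |f x| ≤ M * |x|) (hA : ∀ x, |x * f x| ≤ A)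
    (hB : ∀ x, |x ^ 2 * deriv f x| ≤ B) {p : ℝ} (hp : p ∈ Icc (0 : ℝ) 2) {x : ℝ} (hx : x ≠ 0) :
    |deriv (fun u => u ^ p * f u) x| ≤ 2 * (M + A) + (M + B) := by
  have hax : 0 < |x| := abs_pos.mpr hx
  have hfirst : |p * x ^ (p - 1) * f x| ≤ 2 * (M + A) := by
    have hpow : |x| ^ (p - 1) ≤ |x| ^ (-1 : ℝ) + |x| ^ (1 : ℝ) :=
      rpow_le_rpow_add_rpow hax (by linarith [hp.1]) (by linarith [hp.2])
    rw [rpow_neg_one, rpow_one] at hpow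
    have hdiv : |x|⁻¹ * |f x| ≤ M := by
      rw [inv_mul_le_iff₀ hax, mul_comm]; exact hlin x
    calc |p * x ^ (p - 1) * f x| ≤ 2 * (|x| ^ (p - 1) * |f x|) := by
          rw [abs_mul, abs_mul, abs_of_nonneg hp.1, mul_assoc]
          gcongr
          · exact hp.2
          · exact abs_rpow_le_abs_rpow x _
      _ ≤ 2 * ((|x|⁻¹ + |x|) * |f x|) := by gcongr
      _ ≤ 2 * (M + A) := by rw [add_mul, ← abs_mul]; linarith [hA x]
  have hsecond : |x ^ p * deriv f x| ≤ M + B := by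
    have hpow : |x| ^ p ≤ |x| ^ (0 : ℝ) + |x| ^ (2 : ℝ) := rpow_le_rpow_add_rpow hax hp.1 hp.2
    rw [rpow_zero, rpow_two, sq_abs] at hpow
    calc |x ^ p * deriv f x| ≤ (1 + x ^ 2) * |deriv f x| := by
          rw [abs_mul]; gcongr; exact (abs_rpow_le_abs_rpow x p).trans hpow
      _ ≤ M + B := by
          rw [add_mul, one_mul, ← abs_of_nonneg (sq_nonneg x), ← abs_mul]
          linarith [hM x, hB x]
  rw [(hasDerivAt_rpow_mul (hf x) p hx).deriv]
  exact (abs_add_le _ _).trans (add_le_add hfirst hsecond)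

theorem exists_lipschitzWith_rpow_mul (hf : Differentiable ℝ f) {M A C₁ C₂ : ℝ}
    (hM : ∀ x, |deriv f x| ≤ M) (hA : ∀ x, |x * f x| ≤ A)
    (hC₁ : ∀ x, |deriv (fun u => u ^ (1 / 2 : ℝ) * f u) x| ≤ C₁)
    (hC₂ : ∀ x, |deriv (fun u => u ^ (2 : ℝ) * f u) x| ≤ C₂) :
    ∃ K : ℝ≥0, ∀ p ∈ Icc (0 : ℝ) 2, LipschitzWith K fun u => u ^ p * f u := by
  have hf₀ : f 0 = 0 :=
    apply_zero_eq_zero_of_abs_deriv_rpow_mul_le hf (by norm_num) (by norm_num) fun x _ => hC₁ x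
  have hlin (x : ℝ) : |f x| ≤ M * |x| := by
    simpa [hf₀] using abs_sub_le_mul_of_abs_deriv_le_of_ne 0 hf.continuous (fun x _ => hf x)
      (fun x _ => hM x) 0 x
  refine ⟨(2 * (M + A) + (M + (C₂ + 2 * A))).toNNReal, fun p hp =>
    LipschitzWith.of_dist_le' fun x y => ?_⟩
  rw [Real.dist_eq, Real.dist_eq]
  exact abs_sub_le_mul_of_abs_deriv_le_of_ne (g := fun u => u ^ p * f u) 0
    ((continuous_rpow_const hp.1).mul hf.continuous)
    (fun x hx => (hasDerivAt_rpow_mul (hf x) p hx).differentiableAt)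
    (fun x hx => abs_deriv_rpow_mul_le hf hM hlin hA (abs_sq_mul_deriv_le hf hA hC₂) hp hx) y x

end

theorem integral_eq_mul_integral_comp_mul_add (g : ℝ → ℝ) (e : ℝ) {b : ℝ} (hb : 0 < b) :
    ∫ u, g u = b * ∫ v, g (b * v + e) := by
  rw [Measure.integral_comp_mul_left (fun u => g (u + e)), integral_add_right_eq_self,
    abs_of_pos (inv_pos.mpr hb), smul_eq_mul, mul_inv_cancel_left₀ hb.ne']

theorem abs_integral_comp_sub_div_mul_le {k h : ℝ → ℝ} (hk : Continuous k)
    (hks : HasCompactSupport k) (hk₀ : ∫ v, k v = 0) {K : ℝ≥0} (hh : LipschitzWith K h)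
    (e : ℝ) {b : ℝ} (hb : 0 < b) :
    |∫ u, k ((u - e) / b) * h u| ≤ K * (∫ v, |v| * |k v|) * b ^ 2 := by
  have hsub : ∫ u, k ((u - e) / b) * h u = b * ∫ v, k v * (h (b * v + e) - h e) := by
    have hcancel (v : ℝ) : (b * v + e - e) / b = v := by field_simp; ring
    have hint (c : ℝ → ℝ) (hc : Continuous c) : Integrable fun v => k v * c v :=
      (hk.mul hc).integrable_of_hasCompactSupport hks.mul_right
    rw [integral_eq_mul_integral_comp_mul_add _ e hb]
    simp_rw [hcancel, mul_sub]
    have hhc := hh.continuous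
    rw [integral_sub (hint (fun v => h (b * v + e)) (by fun_prop)) (hint _ continuous_const),
      integral_mul_const, hk₀, zero_mul, sub_zero]
  have hpointwise (v : ℝ) : |k v * (h (b * v + e) - h e)| ≤ K * b * (|v| * |k v|) := by
    have := hh.dist_le_mul (b * v + e) e
    rw [Real.dist_eq, Real.dist_eq, add_sub_cancel_right, abs_mul, abs_of_pos hb] at this
    rw [abs_mul]
    calc |k v| * |h (b * v + e) - h e| ≤ |k v| * (K * (b * |v|)) := by gcongr
      _ = K * b * (|v| * |k v|) := by ring
  have hJ : Integrable fun v => |v| * |k v| :=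
    (continuous_abs.mul hk.abs).integrable_of_hasCompactSupport hks.abs.mul_left
  calc |∫ u, k ((u - e) / b) * h u|
      = b * |∫ v, k v * (h (b * v + e) - h e)| := by rw [hsub, abs_mul, abs_of_pos hb]
    _ ≤ b * ∫ v, K * b * (|v| * |k v|) := by
        gcongr
        exact (abs_integral_le_integral_abs).trans
          (integral_mono_of_nonneg (Eventually.of_forall fun _ => abs_nonneg _)
            (hJ.const_mul _) (Eventually.of_forall hpointwise))
    _ = K * (∫ v, |v| * |k v|) * b ^ 2 := by rw [integral_const_mul]; ring

theorem lemma4_first_derivative_bound_general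
    (f K1 : ℝ → ℝ)
    -- f has bounded continuous second-order derivatives
    (hf_C2 : ContDiff ℝ 2 f)
    (hf_bd : ∀ k, k ≤ 2 → ∃ C : ℝ, ∀ x : ℝ, |iteratedDeriv k f x| ≤ C)
    -- the functions h_p(e) = e^p f(e) have bounded derivatives up to order 2
    (hhp_bd : ∀ p ∈ Set.Icc (0:ℝ) 2, ∀ k, k ≤ 2 →
      ∃ C : ℝ, ∀ e : ℝ, |iteratedDeriv k (fun u : ℝ => u ^ p * f u) e| ≤ C)
    -- K1 is a symmetric, compactly supported, C³ kernel
    (hK1_supp : HasCompactSupport K1)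
    (hK1_C3 : ContDiff ℝ 3 K1)
    (hK1_deriv_int : ∀ ℓ ∈ ({1,2,3} : Set ℕ), ∫ v, iteratedDeriv ℓ K1 v = 0) :
    ∃ C > (0:ℝ), ∀ (e p b1 : ℝ), p ∈ Set.Icc (0:ℝ) 2 → 0 < b1 →
      |∫ u, iteratedDeriv 1 K1 ((u - e) / b1) * (u ^ p * f u)| ≤ C * b1^2 := by
  have hf : Differentiable ℝ f := hf_C2.differentiable (by norm_num)
  obtain ⟨M, hM⟩ := hf_bd 1 (by norm_num)
  obtain ⟨A, hA⟩ := hhp_bd 1 (by norm_num) 0 (by norm_num)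
  obtain ⟨C₁, hC₁⟩ := hhp_bd (1 / 2) (by norm_num) 1 (by norm_num)
  obtain ⟨C₂, hC₂⟩ := hhp_bd 2 (by norm_num) 1 (by norm_num)
  simp only [iteratedDeriv_zero, iteratedDeriv_one, rpow_one] at hM hA hC₁ hC₂
  obtain ⟨K, hK⟩ := exists_lipschitzWith_rpow_mul hf hM hA hC₁ hC₂
  have hK1' : ∫ v, deriv K1 v = 0 := by simpa using hK1_deriv_int 1 (by simp)
  refine ⟨K * (∫ v, |v| * |deriv K1 v|) + 1, by positivity, fun e p b hp hb => ?_⟩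
  rw [iteratedDeriv_one]
  calc _ ≤ K * (∫ v, |v| * |deriv K1 v|) * b ^ 2 :=
        abs_integral_comp_sub_div_mul_le (hK1_C3.continuous_deriv (by norm_num)) hK1_supp.deriv
          hK1' (hK p hp) e hb
    _ ≤ _ := by gcongr; linarith

/-- Lemma 4, first-derivative bound: there exists `C > 0` such that
for every `e ∈ ℝ`, every `p ∈ [0,2]` and every `b1 > 0`,
`|∫ K1^{(1)}((u - e)/b1) u^p f(u) du| ≤ C b1²`. -/
theorem lemma4_first_derivative_bound
    (f K1 : ℝ → ℝ)
    -- f is a probability density function on ℝ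
    (hf_nonneg : ∀ x, 0 ≤ f x)
    (hf_int : ∫ x, f x = 1)
    -- f has bounded continuous second-order derivatives
    (hf_C2 : ContDiff ℝ 2 f)
    (hf_bd : ∀ k, k ≤ 2 → ∃ C : ℝ, ∀ x : ℝ, |iteratedDeriv k f x| ≤ C)
    -- the functions h_p(e) = e^p f(e) have bounded derivatives up to order 2
    (hhp_bd : ∀ p ∈ Set.Icc (0:ℝ) 2, ∀ k, k ≤ 2 →
      ∃ C : ℝ, ∀ e : ℝ, |iteratedDeriv k (fun u : ℝ => u ^ p * f u) e| ≤ C)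
    -- K1 is a symmetric, compactly supported, C³ kernel
    (hK1_symm : ∀ v, K1 (-v) = K1 v)
    (hK1_supp : HasCompactSupport K1)
    (hK1_C3 : ContDiff ℝ 3 K1)
    (hK1_int : ∫ v, K1 v = 1)
    (hK1_deriv_int : ∀ ℓ ∈ ({1,2,3} : Set ℕ), ∫ v, iteratedDeriv ℓ K1 v = 0)
    (hK1_vderiv_int : ∀ ℓ ∈ ({2,3} : Set ℕ), ∫ v, v * iteratedDeriv ℓ K1 v = 0) :
    ∃ C > (0:ℝ), ∀ (e p b1 : ℝ), p ∈ Set.Icc (0:ℝ) 2 → 0 < b1 →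
      |∫ u, iteratedDeriv 1 K1 ((u - e) / b1) * (u ^ p * f u)| ≤ C * b1^2 :=
  lemma4_first_derivative_bound_general f K1 hf_C2 hf_bd hhp_bd hK1_supp hK1_C3 hK1_deriv_int
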